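/- With F and c as above, for each fixed L > 0 let w* = √L·√(2(k−1))/(ρ − log(1+ρ)). Then F(w*)/[2L/(ρ − log(1+ρ))] → 1 as L → ∞, i.e., the ratio of the Subspace-CUSUM expected detection delay (with optimized window) to the optimal CUSUM delay 2 log γ/(ρ − log(1+ρ)) tends to 1 as γ → ∞. -/

import Mathlib

open Filter Topology Real

/-! With `D = ρ - log (1 + ρ) > 0`, the ratio splits as `D / (c - 1 - log c) + w* D / (2L)`.
Since `w*` is a multiple of `√L`, the window term is a multiple of `1/√L` and
`c (w*) = (1 + ρ)(1 - C/√L) → 1 + ρ`, so the first term tends to `D / D = 1` by continuity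
of `log` at `1 + ρ`. -/

lemma sub_log_one_add_pos {ρ : ℝ} (hρ : 0 < ρ) : 0 < ρ - log (1 + ρ) := by
  have := log_lt_sub_one_of_pos (by linarith : 0 < 1 + ρ) (by linarith : 1 + ρ ≠ 1)
  linarith

lemma tendsto_const_div_sqrt_atTop (C : ℝ) : Tendsto (fun x => C / √x) atTop (𝓝 0) :=
  tendsto_const_nhds.div_atTop tendsto_sqrt_atTop

lemma tendsto_div_add_div_div_of_tendsto {α : Type*} {l : Filter α} {a g w : α → ℝ} {D : ℝ}
    (ha : ∀ᶠ x in l, a x ≠ 0) (hg : Tendsto g l (𝓝 D)) (hD : D ≠ 0)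
    (hw : Tendsto (fun x => w x / (a x / D)) l (𝓝 0)) :
    Tendsto (fun x => (a x / g x + w x) / (a x / D)) l (𝓝 1) := by
  have hfirst : Tendsto (fun x => D / g x) l (𝓝 1) := by
    rw [← div_self hD]
    exact tendsto_const_nhds.div hg hD
  refine (add_zero (1 : ℝ) ▸ hfirst.add hw).congr' ?_
  filter_upwards [ha] with x hx
  rw [add_div, div_div_div_cancel_left' _ _ hx]

theorem stmt12_general (k : ℕ) (ρ : ℝ) (hρ : 0 < ρ)
    (c : ℝ → ℝ) (hc : c = fun w => (1 + ρ) * (1 - ((k : ℝ) - 1) / (w * ρ)))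
    (F : ℝ → ℝ → ℝ)
    (hF : F = fun L w => 2 * L / (c w - 1 - Real.log (c w)) + w)
    (wstar : ℝ → ℝ)
    (hwstar : wstar = fun L =>
      Real.sqrt L * Real.sqrt (2 * ((k : ℝ) - 1)) / (ρ - Real.log (1 + ρ))) :
    Tendsto (fun L => F L (wstar L) / (2 * L / (ρ - Real.log (1 + ρ))))
      atTop (nhds 1) := by
  subst hc hF hwstar
  set D := ρ - log (1 + ρ)
  set B := √(2 * ((k : ℝ) - 1))
  have hD : 0 < D := sub_log_one_add_pos hρ
  have hcw : Tendsto (fun L => (1 + ρ) * (1 - ((k : ℝ) - 1) / (√L * B / D * ρ))) atTop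
      (𝓝 (1 + ρ)) := by
    have h := ((tendsto_const_div_sqrt_atTop (((k : ℝ) - 1) * D / (B * ρ))).const_sub 1).const_mul
      (1 + ρ)
    simp only [sub_zero, mul_one] at h
    refine h.congr fun L => ?_
    simp only [div_eq_mul_inv, mul_inv, inv_inv]
    ring
  have hg := (hcw.sub_const 1).sub (hcw.log (by linarith))
  rw [add_sub_cancel_left] at hg
  refine tendsto_div_add_div_div_of_tendsto ?_ hg hD.ne' ?_
  · filter_upwards [eventually_gt_atTop 0] with L hL
    positivity
  · refine (tendsto_const_div_sqrt_atTop (B / 2)).congr' ?_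
    filter_upwards [eventually_gt_atTop 0] with L hL
    have hs : 0 < √L := sqrt_pos.2 hL
    field_simp
    rw [sq_sqrt hL.le]

/-- First-order asymptotic optimality (Theorem 1): with
`F L w = 2L/[c(w) − 1 − log c(w)] + w`, `c(w) = (1+ρ)(1 − (k−1)/(wρ))` and the
optimized window `w* = √L·√(2(k−1))/(ρ − log(1+ρ))`, the ratio of the
Subspace-CUSUM delay `F L w*` to the optimal CUSUM delay `2L/(ρ − log(1+ρ))`
tends to 1 as `L → ∞`. -/
theorem stmt12 (k : ℕ) (hk : 2 ≤ k) (ρ : ℝ) (hρ : 0 < ρ)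
    (c : ℝ → ℝ) (hc : c = fun w => (1 + ρ) * (1 - ((k : ℝ) - 1) / (w * ρ)))
    (F : ℝ → ℝ → ℝ)
    (hF : F = fun L w => 2 * L / (c w - 1 - Real.log (c w)) + w)
    (wstar : ℝ → ℝ)
    (hwstar : wstar = fun L =>
      Real.sqrt L * Real.sqrt (2 * ((k : ℝ) - 1)) / (ρ - Real.log (1 + ρ))) :
    Tendsto (fun L => F L (wstar L) / (2 * L / (ρ - Real.log (1 + ρ))))
      atTop (nhds 1) :=
  stmt12_general k ρ hρ c hc F hF wstar hwstar
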